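/- Let c be an alternating cyclic sequence over {capL, capR, cupL, cupR} (caps and cups alternate) with turning number T(c) = +2 or -2. Then c can be reduced to a cycle of length 2 (either (capR, cupL) or (capL, cupR)) by repeatedly deleting a cyclically adjacent pair consisting of one element of turning number +1 and one of turning number -1, where each deletion preserves the alternation property and the turning number. -/

import Mathlib

inductive CapCup : Type
  | capL | capR | cupL | cupR
deriving DecidableEq

def CapCup.isCap : CapCup → Bool
  | .capL => true
  | .capR => true
  | .cupL => false
  | .cupR => false

def CapCup.turn : CapCup → ℤ
  | .capR => 1
  | .capL => -1
  | .cupR => -1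
  | .cupL => 1

/-- One reduction step: delete a cyclically adjacent pair of elements whose
turning numbers are `+1` and `-1` (in some order).  The second disjunct handles
the wrap-around pair formed by the last and first elements of the list. -/
def delStep (c c' : List CapCup) : Prop :=
  (∃ (l r : List CapCup) (x y : CapCup), x.turn + y.turn = 0 ∧
      c = l ++ x :: y :: r ∧ c' = l ++ r) ∨
  (∃ (m : List CapCup) (x y : CapCup), x.turn + y.turn = 0 ∧
      c = y :: (m ++ [x]) ∧ c' = m)

/-!
Proof idea: as long as two adjacent entries have opposite turning numbers, delete them; this
keeps the list alternating (an adjacent pair is one cap and one cup) and keeps its turning number.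
When no such pair is left, all entries have the same turning number `±1`, so the absolute value of
the total, `2`, is the length. An alternating list of length two with turning number `±2` is one of
the four listed cycles. Wrap-around deletions are never needed.
-/

theorem List.IsChain.append_of_append_cons_cons {α : Type*} {R : α → α → Prop}
    (hR : ∀ a x y b, R a x → R x y → R y b → R a b) {l r : List α} {x y : α}
    (h : (l ++ x :: y :: r).IsChain R) : (l ++ r).IsChain R := by
  rw [List.isChain_append] at h ⊢
  obtain ⟨hl, hxyr, hlx⟩ := h
  obtain ⟨hxy, hyr⟩ := List.isChain_cons_cons.1 hxyr
  obtain ⟨hyb, hr⟩ := List.isChain_cons.1 hyr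
  exact ⟨hl, hr, fun a ha b hb => hR a x y b (hlx a ha x rfl) hxy (hyb b hb)⟩

namespace CapCup

theorem turn_eq_one_or_neg_one (a : CapCup) : a.turn = 1 ∨ a.turn = -1 := by
  cases a <;> simp [turn]

theorem turn_add_eq_zero_or_turn_eq (a b : CapCup) : a.turn + b.turn = 0 ∨ a.turn = b.turn := by
  rcases a.turn_eq_one_or_neg_one with ha | ha <;>
    rcases b.turn_eq_one_or_neg_one with hb | hb <;> omega

theorem exists_opposite_adjacent_or_isChain_turn_eq : ∀ c : List CapCup,
    (∃ (l r : List CapCup) (x y : CapCup), x.turn + y.turn = 0 ∧ c = l ++ x :: y :: r) ∨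
      (c.map turn).IsChain (· = ·)
  | [] => .inr .nil
  | [_] => .inr (.singleton _)
  | a :: b :: t => by
    rcases turn_add_eq_zero_or_turn_eq a b with hab | hab
    · exact .inl ⟨[], t, a, b, hab, rfl⟩
    rcases exists_opposite_adjacent_or_isChain_turn_eq (b :: t) with ⟨l, r, x, y, hxy, ht⟩ | ht
    · exact .inl ⟨a :: l, r, x, y, hxy, by rw [ht, List.cons_append]⟩
    · exact .inr (List.IsChain.cons_cons hab ht)

theorem natAbs_sum_map_turn_of_isChain_eq {c : List CapCup} (h : (c.map turn).IsChain (· = ·)) :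
    (c.map turn).sum.natAbs = c.length := by
  rcases c with _ | ⟨a, t⟩
  · rfl
  rw [List.map_cons, List.isChain_cons_eq_iff_eq_replicate, List.length_map] at h
  rw [List.map_cons, h, List.sum_cons, List.sum_replicate, nsmul_eq_mul, List.length_cons]
  rcases a.turn_eq_one_or_neg_one with ha | ha <;> rw [ha] <;> omega

theorem sum_map_turn_append_cons_cons {l r : List CapCup} {x y : CapCup}
    (hxy : x.turn + y.turn = 0) :
    ((l ++ x :: y :: r).map turn).sum = ((l ++ r).map turn).sum := by
  simp only [List.map_append, List.map_cons, List.sum_append, List.sum_cons]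
  omega

theorem eq_of_isCap_ne_of_turn_add {x y : CapCup} (hxy : x.isCap ≠ y.isCap)
    (hsum : x.turn + y.turn = 2 ∨ x.turn + y.turn = -2) :
    [x, y] = [capR, cupL] ∨ [x, y] = [cupL, capR] ∨
      [x, y] = [capL, cupR] ∨ [x, y] = [cupR, capL] := by
  revert hxy hsum
  cases x <;> cases y <;> decide

theorem reduces_of_isChain_isCap_ne (c : List CapCup)
    (halt : c.IsChain fun a b => a.isCap ≠ b.isCap)
    (hsum : (c.map turn).sum = 2 ∨ (c.map turn).sum = -2) :
    ∃ c'' : List CapCup, Relation.ReflTransGen delStep c c'' ∧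
      (c'' = [capR, cupL] ∨ c'' = [cupL, capR] ∨
        c'' = [capL, cupR] ∨ c'' = [cupR, capL]) := by
  induction hn : c.length using Nat.strong_induction_on generalizing c with
  | _ n ih =>
  rcases exists_opposite_adjacent_or_isChain_turn_eq c with ⟨l, r, x, y, hxy, rfl⟩ | hconst
  · have hlen : (l ++ r).length < n := by
      simp only [← hn, List.length_append, List.length_cons]; omega
    have halt' := halt.append_of_append_cons_cons (fun a x y b => by
      cases a.isCap <;> cases x.isCap <;> cases y.isCap <;> cases b.isCap <;> simp)
    obtain ⟨c'', hsteps, hc''⟩ :=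
      ih _ hlen _ halt' (sum_map_turn_append_cons_cons hxy ▸ hsum) rfl
    exact ⟨c'', .head (.inl ⟨l, r, x, y, hxy, rfl, rfl⟩) hsteps, hc''⟩
  · have hlen : c.length = 2 := by
      rw [← natAbs_sum_map_turn_of_isChain_eq hconst]; omega
    obtain ⟨x, y, rfl⟩ := List.length_eq_two.1 hlen
    refine ⟨[x, y], .refl, eq_of_isCap_ne_of_turn_add (List.isChain_cons_cons.1 halt).1 ?_⟩
    simpa using hsum

end CapCup

/-- An alternating cap-cup cycle of turning number `±2` can be reduced, by
repeatedly deleting cyclically adjacent pairs of opposite turning numbers, to a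
cycle of length two: `(capR, cupL)` or `(capL, cupR)` (up to cyclic rotation). -/
theorem capCupCycle_reduction (c : List CapCup) (hne : c ≠ [])
    (halt : ∀ i : Fin c.length,
      (c.get i).isCap ≠ (c.get ⟨((i : ℕ) + 1) % c.length,
        Nat.mod_lt _ (List.length_pos_iff.mpr hne)⟩).isCap)
    (hsum : (c.map CapCup.turn).sum = 2 ∨ (c.map CapCup.turn).sum = -2) :
    ∃ c'' : List CapCup, Relation.ReflTransGen delStep c c'' ∧
      (c'' = [CapCup.capR, CapCup.cupL] ∨ c'' = [CapCup.cupL, CapCup.capR] ∨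
       c'' = [CapCup.capL, CapCup.cupR] ∨ c'' = [CapCup.cupR, CapCup.capL]) := by
  refine CapCup.reduces_of_isChain_isCap_ne c (List.isChain_iff_getElem.2 fun i hi => ?_) hsum
  have h := halt ⟨i, by omega⟩
  rwa [show (⟨(i + 1) % c.length, _⟩ : Fin c.length) = ⟨i + 1, hi⟩ from
    Fin.ext (Nat.mod_eq_of_lt hi)] at h
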